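/- For every integer Q≥2 there is a constant C_Q>0 such that the following holds. Let 𝒰 be a Unique Games instance over alphabet [Q] on a finite multigraph G=(V,E) with m>0 and no isolated vertices, and suppose τ_UG(𝒰) ≤ ε. Then for every real L ≥ 1, Σ_{s∈V} π(s)·μ^{UG}_L(s) ≤ C_Q·ε·L. Consequently, for every α>0, Σ_{s∈V: μ^{UG}_L(s) ≥ α} π(s) ≤ C_Q·εL/α. -/

import Mathlib

open scoped Classical

noncomputable section

/-- Degree of a vertex in a finite multigraph given by endpoint maps (with multiplicity). -/
def mdeg {V E : Type} [Fintype E] [DecidableEq V] (fste snde : E → V) (v : V) : ℕ :=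
  (Finset.univ.filter (fun e => fste e = v)).card +
    (Finset.univ.filter (fun e => snde e = v)).card

/-- The label-lifted lazy walk on `V × [Q]`: from `(v,b)` stay put with probability `1/2`,
and for each edge copy with endpoints `v,u`, move to `(u, π_{vu}(b))` with probability
`1/(2 deg v)` (constraints are stored oriented from `fste` to `snde`). -/
def ugWalk {V E : Type} [Fintype V] [Fintype E] [DecidableEq V] {Q : ℕ}
    (fste snde : E → V) (perm : E → Equiv.Perm (Fin Q)) :
    Matrix (V × Fin Q) (V × Fin Q) ℝ :=
  Matrix.of fun p q =>
    (if q = p then (1 / 2 : ℝ) else 0) +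
    ((Finset.univ.filter (fun e =>
        (fste e = p.1 ∧ snde e = q.1 ∧ perm e p.2 = q.2) ∨
        (snde e = p.1 ∧ fste e = q.1 ∧ (perm e)⁻¹ p.2 = q.2))).card : ℝ) /
      (2 * (mdeg fste snde p.1 : ℝ))

/-- The geometric (Personalized PageRank) kernel at scale `L`:
`pr_L = (1/(L+1)) Σ_t (L/(L+1))^t M̂^t`. -/
def ugPr {V E : Type} [Fintype V] [Fintype E] [DecidableEq V] {Q : ℕ}
    (fste snde : E → V) (perm : E → Equiv.Perm (Fin Q)) (L : ℝ)
    (p q : V × Fin Q) : ℝ :=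
  ∑' t : ℕ, (1 / (L + 1)) * (L / (L + 1)) ^ t * (ugWalk fste snde perm ^ t) p q

/-- Ambiguity of seed label `a` at seed `s` and scale `L`:
`Amb_L(s,a) = Σ_v (u_{L,s}(v) − max_b p^{a,b}_{L,s}(v))`. -/
def ugAmb {V E : Type} [Fintype V] [Fintype E] [DecidableEq V] {Q : ℕ}
    (fste snde : E → V) (perm : E → Equiv.Perm (Fin Q)) (L : ℝ) (s : V) (a : Fin Q) : ℝ :=
  ∑ v : V, ((∑ b : Fin Q, ugPr fste snde perm L (s, a) (v, b)) -
    ⨆ b : Fin Q, ugPr fste snde perm L (s, a) (v, b))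

/-- `μ^{UG}_L(s) = min_{a∈[Q]} Amb_L(s,a)`. -/
def ugMu {V E : Type} [Fintype V] [Fintype E] [DecidableEq V] {Q : ℕ}
    (fste snde : E → V) (perm : E → Equiv.Perm (Fin Q)) (L : ℝ) (s : V) : ℝ :=
  ⨅ a : Fin Q, ugAmb fste snde perm L s a

/-- `τ_UG(𝒰)`: the minimum, over labelings `x : V → [Q]`, of the fraction of violated
edge copies. -/
def tauUG {V E : Type} [Fintype V] [Fintype E] [DecidableEq V] {Q : ℕ}
    (fste snde : E → V) (perm : E → Equiv.Perm (Fin Q)) : ℝ :=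
  ⨅ x : V → Fin Q,
    ((Finset.univ.filter (fun e => x (snde e) ≠ perm e (x (fste e)))).card : ℝ) /
      (Fintype.card E : ℝ)

/-! Fix an optimal labeling `x` and call a state `(v, b)` of the lifted walk mislabeled when
`b ≠ x v`. The ambiguity `Amb_L(s, x s)` is at most the `pr_L`-mass that the walk started at
`(s, x s)` puts on mislabeled states. The lifted walk is stochastic and `(v, b) ↦ deg v` is a
stationary measure, so if the walk is started from the correctly labeled states with weights
`deg`, its mislabeled mass grows in each step by at most the stationary flow from correctly
labeled into mislabeled states, and that flow is exactly the number of violated edge copies.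
Against the geometric weights `ζ λ^t`, which have mean `Σ t ζ λ^t = L`, this gives
`Σ_s deg(s) μ_L(s) ≤ L · #violated ≤ ε L m`, so `C = 1` works; the tail bound is Markov's
inequality. -/

open Matrix

theorem hasSum_geometric_weights {L : ℝ} (hL : 0 ≤ L) (a b : ℝ) :
    HasSum (fun t : ℕ => 1 / (L + 1) * (L / (L + 1)) ^ t * (a + t * b)) (a + L * b) := by
  have hL1 : 0 < L + 1 := by linarith
  have hr0 : 0 ≤ L / (L + 1) := by positivity
  have hr1 : L / (L + 1) < 1 := (div_lt_one hL1).2 (lt_add_one L)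
  have hsub : 1 - L / (L + 1) = 1 / (L + 1) := by field_simp; ring
  have hgeom := hasSum_geometric_of_lt_one hr0 hr1
  have harith := hasSum_coe_mul_geometric_of_norm_lt_one
    (by rwa [Real.norm_of_nonneg hr0] : ‖L / (L + 1)‖ < 1)
  have hsum := ((hgeom.mul_left a).add (harith.mul_left b)).mul_left (1 / (L + 1))
  have hval : 1 / (L + 1) * (a * (1 / (L + 1))⁻¹ + b * (L / (L + 1) / (1 / (L + 1)) ^ 2))
      = a + L * b := by
    field_simp
  rw [hsub, hval] at hsum
  exact hsum.congr_fun fun t => by ring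

theorem Finset.sum_filter_le_sum_mul_div {ι : Type*} (s : Finset ι) {w μ : ι → ℝ}
    (hw : ∀ i ∈ s, 0 ≤ w i) (hμ : ∀ i ∈ s, 0 ≤ μ i) {α : ℝ} (hα : 0 < α)
    [DecidablePred fun i => α ≤ μ i] :
    ∑ i ∈ s.filter (fun i => α ≤ μ i), w i ≤ (∑ i ∈ s, w i * μ i) / α := by
  rw [le_div_iff₀ hα, Finset.sum_mul]
  calc ∑ i ∈ s.filter (fun i => α ≤ μ i), w i * α
      ≤ ∑ i ∈ s.filter (fun i => α ≤ μ i), w i * μ i :=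
        Finset.sum_le_sum fun i hi =>
          mul_le_mul_of_nonneg_left (Finset.mem_filter.1 hi).2 (hw i (Finset.mem_filter.1 hi).1)
    _ ≤ ∑ i ∈ s, w i * μ i :=
        Finset.sum_le_sum_of_subset_of_nonneg (Finset.filter_subset _ _)
          fun i hi _ => mul_nonneg (hw i hi) (hμ i hi)

namespace Matrix

variable {ι : Type*} [Fintype ι] [DecidableEq ι] {M : Matrix ι ι ℝ} {w f : ι → ℝ}

theorem vecMul_pow_of_vecMul_eq (hw : w ᵥ* M = w) (t : ℕ) : w ᵥ* M ^ t = w := by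
  induction t with
  | zero => simp
  | succ t ih => rw [pow_succ, ← vecMul_vecMul, ih, hw]

theorem vecMul_mono_of_mem_rowStochastic (hM : M ∈ rowStochastic ℝ ι) {g h : ι → ℝ}
    (hgh : g ≤ h) : g ᵥ* M ≤ h ᵥ* M := fun _ =>
  Finset.sum_le_sum fun i _ => mul_le_mul_of_nonneg_right (hgh i) (nonneg_of_mem_rowStochastic hM)

theorem mulVec_le_one_of_mem_rowStochastic (hM : M ∈ rowStochastic ℝ ι) (hf : f ≤ 1) :
    M *ᵥ f ≤ 1 := fun i => by
  calc (M *ᵥ f) i ≤ (M *ᵥ 1) i :=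
        Finset.sum_le_sum fun j _ =>
          mul_le_mul_of_nonneg_left (hf j) (nonneg_of_mem_rowStochastic hM)
    _ = 1 := by rw [one_vecMul_of_mem_rowStochastic hM]; rfl

/-- `w ⬝ᵥ ((1 - f) * (M *ᵥ f))` is the one-step `w`-flow from `1 - f` into `f`: a mass dominated
by `w` gains at most this much weight on `f` per step. -/
theorem vecMul_dotProduct_le_add_flow (hM : M ∈ rowStochastic ℝ ι) (hf0 : 0 ≤ f) (hf1 : f ≤ 1)
    {h : ι → ℝ} (hh0 : 0 ≤ h) (hhw : h ≤ w) :
    (h ᵥ* M) ⬝ᵥ f ≤ h ⬝ᵥ f + w ⬝ᵥ ((1 - f) * (M *ᵥ f)) := by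
  have hMf0 : 0 ≤ M *ᵥ f := nonneg_mulVec_of_mem_rowStochastic hM hf0
  have hMf1 : M *ᵥ f ≤ 1 := mulVec_le_one_of_mem_rowStochastic hM hf1
  rw [← dotProduct_mulVec]
  have split : h ⬝ᵥ (M *ᵥ f) = h ⬝ᵥ (f * (M *ᵥ f)) + h ⬝ᵥ ((1 - f) * (M *ᵥ f)) := by
    rw [← dotProduct_add, ← add_mul, add_sub_cancel, one_mul]
  rw [split]
  exact add_le_add
    (dotProduct_le_dotProduct_of_nonneg_left (fun i => mul_le_of_le_one_right (hf0 i) (hMf1 i)) hh0)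
    (dotProduct_le_dotProduct_of_nonneg_right hhw
      (fun i => mul_nonneg (sub_nonneg.2 (hf1 i)) (hMf0 i)))

theorem vecMul_pow_dotProduct_le_add_flow (hM : M ∈ rowStochastic ℝ ι) (hw : w ᵥ* M = w)
    (hf0 : 0 ≤ f) (hf1 : f ≤ 1) {g : ι → ℝ} (hg0 : 0 ≤ g) (hgw : g ≤ w) (t : ℕ) :
    (g ᵥ* M ^ t) ⬝ᵥ f ≤ g ⬝ᵥ f + t * w ⬝ᵥ ((1 - f) * (M *ᵥ f)) := by
  induction t with
  | zero => simp
  | succ t ih =>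
    have hpow : M ^ t ∈ rowStochastic ℝ ι := pow_mem hM t
    calc (g ᵥ* M ^ (t + 1)) ⬝ᵥ f = ((g ᵥ* M ^ t) ᵥ* M) ⬝ᵥ f := by
          rw [pow_succ, vecMul_vecMul]
      _ ≤ (g ᵥ* M ^ t) ⬝ᵥ f + w ⬝ᵥ ((1 - f) * (M *ᵥ f)) :=
          vecMul_dotProduct_le_add_flow hM hf0 hf1 (nonneg_vecMul_of_mem_rowStochastic hpow hg0)
            ((vecMul_mono_of_mem_rowStochastic hpow hgw).trans_eq (vecMul_pow_of_vecMul_eq hw t))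
      _ ≤ g ⬝ᵥ f + (t + 1 : ℕ) * w ⬝ᵥ ((1 - f) * (M *ᵥ f)) := by
          push_cast; linarith

def geomResolvent (M : Matrix ι ι ℝ) (L : ℝ) : Matrix ι ι ℝ :=
  of fun i j => ∑' t : ℕ, 1 / (L + 1) * (L / (L + 1)) ^ t * (M ^ t) i j

theorem hasSum_geomResolvent (hM : M ∈ rowStochastic ℝ ι) {L : ℝ} (hL : 0 ≤ L) (i j : ι) :
    HasSum (fun t : ℕ => 1 / (L + 1) * (L / (L + 1)) ^ t * (M ^ t) i j)
      (geomResolvent M L i j) := by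
  refine Summable.hasSum (Summable.of_nonneg_of_le (fun t => ?_) (fun t => ?_)
    (hasSum_geometric_weights hL 1 0).summable)
  · exact mul_nonneg (by positivity) (nonneg_of_mem_rowStochastic (pow_mem hM t))
  · simpa using mul_le_mul_of_nonneg_left (le_one_of_mem_rowStochastic (pow_mem hM t))
      (by positivity : 0 ≤ 1 / (L + 1) * (L / (L + 1)) ^ t)

theorem geomResolvent_nonneg (hM : M ∈ rowStochastic ℝ ι) {L : ℝ} (hL : 0 ≤ L) (i j : ι) :
    0 ≤ geomResolvent M L i j :=
  tsum_nonneg fun t => mul_nonneg (by positivity) (nonneg_of_mem_rowStochastic (pow_mem hM t))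

theorem dotProduct_geomResolvent_mulVec_le (hM : M ∈ rowStochastic ℝ ι) (hw : w ᵥ* M = w)
    (hf0 : 0 ≤ f) (hf1 : f ≤ 1) {g : ι → ℝ} (hg0 : 0 ≤ g) (hgw : g ≤ w) {L : ℝ} (hL : 0 ≤ L) :
    g ⬝ᵥ (geomResolvent M L *ᵥ f) ≤ g ⬝ᵥ f + L * w ⬝ᵥ ((1 - f) * (M *ᵥ f)) := by
  have hseries : HasSum (fun t : ℕ => 1 / (L + 1) * (L / (L + 1)) ^ t * ((g ᵥ* M ^ t) ⬝ᵥ f))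
      (g ⬝ᵥ (geomResolvent M L *ᵥ f)) := by
    have hentry : ∀ i j, HasSum (fun t : ℕ => g i * ((1 / (L + 1) * (L / (L + 1)) ^ t *
        (M ^ t) i j) * f j)) (g i * (geomResolvent M L i j * f j)) := fun i j =>
      ((hasSum_geomResolvent hM hL i j).mul_right (f j)).mul_left (g i)
    have hsum := hasSum_sum fun i (_ : i ∈ Finset.univ) =>
      hasSum_sum fun j (_ : j ∈ Finset.univ) => hentry i j
    rw [show g ⬝ᵥ (geomResolvent M L *ᵥ f) = ∑ i, ∑ j, g i * (geomResolvent M L i j * f j) by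
      simp only [dotProduct, mulVec, Finset.mul_sum]]
    refine hsum.congr_fun fun t => ?_
    rw [← dotProduct_mulVec]
    simp only [dotProduct, mulVec, Finset.mul_sum]
    refine Finset.sum_congr rfl fun i _ => Finset.sum_congr rfl fun j _ => ?_
    ring
  refine hasSum_le (fun t => ?_) hseries (hasSum_geometric_weights hL _ _)
  exact mul_le_mul_of_nonneg_left (vecMul_pow_dotProduct_le_add_flow hM hw hf0 hf1 hg0 hgw t)
    (by positivity)

end Matrix

def mislabeled {V : Type} {Q : ℕ} (x : V → Fin Q) : V × Fin Q → ℝ :=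
  fun q => if q.2 = x q.1 then 0 else 1

def violated {V E : Type} [Fintype E] {Q : ℕ} (fste snde : E → V)
    (perm : E → Equiv.Perm (Fin Q)) (x : V → Fin Q) : Finset E :=
  Finset.univ.filter fun e => x (snde e) ≠ perm e (x (fste e))

theorem sum_one_sub_mislabeled_mul {V : Type} [Fintype V] {Q : ℕ} (x : V → Fin Q)
    (h : V × Fin Q → ℝ) : ∑ p, (1 - mislabeled x p) * h p = ∑ v, h (v, x v) := by
  rw [Fintype.sum_prod_type]
  refine Finset.sum_congr rfl fun v _ => ?_
  rw [Finset.sum_eq_single (x v) (fun b _ hb => by simp [mislabeled, hb]) (by simp)]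
  simp [mislabeled]

theorem mislabeled_snde_perm_eq {V E : Type} [Fintype E] {Q : ℕ} {fste snde : E → V}
    {perm : E → Equiv.Perm (Fin Q)} (x : V → Fin Q) (e : E) :
    mislabeled x (snde e, perm e (x (fste e))) =
      if e ∈ violated fste snde perm x then 1 else 0 := by
  simp [mislabeled, violated, eq_comm]

theorem mislabeled_fste_perm_inv_eq {V E : Type} [Fintype E] {Q : ℕ} {fste snde : E → V}
    {perm : E → Equiv.Perm (Fin Q)} (x : V → Fin Q) (e : E) :
    mislabeled x (fste e, (perm e)⁻¹ (x (snde e))) =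
      if e ∈ violated fste snde perm x then 1 else 0 := by
  simp [mislabeled, violated, Equiv.symm_apply_eq]

section UniqueGames

variable {V E : Type} [Fintype V] [Fintype E] [DecidableEq V] {Q : ℕ}
  {fste snde : E → V} {perm : E → Equiv.Perm (Fin Q)}

theorem ugWalk_mulVec (h_ne : ∀ e, fste e ≠ snde e) (f : V × Fin Q → ℝ) (p : V × Fin Q) :
    (ugWalk fste snde perm *ᵥ f) p = f p / 2 +
      (∑ e, ((if fste e = p.1 then f (snde e, perm e p.2) else 0) +
        (if snde e = p.1 then f (fste e, (perm e)⁻¹ p.2) else 0))) /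
      (2 * mdeg fste snde p.1) := by
  have hcard : ∀ q : V × Fin Q, ((Finset.univ.filter (fun e =>
      (fste e = p.1 ∧ snde e = q.1 ∧ perm e p.2 = q.2) ∨
      (snde e = p.1 ∧ fste e = q.1 ∧ (perm e)⁻¹ p.2 = q.2))).card : ℝ) =
      ∑ e, ((if fste e = p.1 ∧ (snde e, perm e p.2) = q then 1 else 0) +
        (if snde e = p.1 ∧ (fste e, (perm e)⁻¹ p.2) = q then 1 else 0)) := by
    intro q
    rw [Finset.filter_or, Finset.card_union_of_disjoint, Nat.cast_add, Finset.sum_add_distrib]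
    · simp only [Finset.card_filter, Nat.cast_sum, Nat.cast_ite, Nat.cast_one, Nat.cast_zero,
        Prod.ext_iff]
    · exact Finset.disjoint_filter.2 fun e _ h1 h2 => h_ne e (h1.1.trans h2.1.symm)
  simp only [mulVec, dotProduct, ugWalk, Matrix.of_apply, add_mul, Finset.sum_add_distrib, hcard]
  rw [Finset.sum_congr rfl fun q _ => div_mul_eq_mul_div _ _ (f q), ← Finset.sum_div]
  congr 1
  · simp [ite_mul, div_eq_inv_mul]
  · simp only [add_mul, Finset.sum_mul, Finset.sum_add_distrib, ite_and, ite_mul, one_mul, zero_mul]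
    congr 2 <;> exact Finset.sum_comm.trans (by simp)

def liftedDeg (fste snde : E → V) : V × Fin Q → ℝ := fun p => mdeg fste snde p.1

theorem sum_mdeg_mul_eq_sum_edges (F : V → ℝ) :
    ∑ v, (mdeg fste snde v : ℝ) * F v = ∑ e, (F (fste e) + F (snde e)) := by
  simp only [mdeg, Finset.card_filter, Nat.cast_add, Nat.cast_sum, add_mul, Finset.sum_mul,
    Finset.sum_add_distrib]
  congr 1 <;> exact Finset.sum_comm.trans (by simp)

theorem ugWalk_mem_rowStochastic (h_ne : ∀ e, fste e ≠ snde e)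
    (hdeg : ∀ v, 0 < mdeg fste snde v) : ugWalk fste snde perm ∈ rowStochastic ℝ (V × Fin Q) := by
  refine ⟨fun p q => ?_, funext fun p => ?_⟩
  · exact add_nonneg (by split_ifs <;> norm_num) (by positivity)
  · have hd : (mdeg fste snde p.1 : ℝ) ≠ 0 := by exact_mod_cast (hdeg p.1).ne'
    rw [ugWalk_mulVec h_ne]
    simp only [Pi.one_apply, mdeg, Finset.sum_add_distrib, Finset.sum_boole] at hd ⊢
    push_cast at hd ⊢
    field_simp
    ring

theorem liftedDeg_dotProduct_ugWalk_mulVec (h_ne : ∀ e, fste e ≠ snde e)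
    (hdeg : ∀ v, 0 < mdeg fste snde v) (f : V × Fin Q → ℝ) :
    liftedDeg fste snde ⬝ᵥ (ugWalk fste snde perm *ᵥ f) = liftedDeg fste snde ⬝ᵥ f := by
  have hterm : ∀ p : V × Fin Q, liftedDeg fste snde p * (ugWalk fste snde perm *ᵥ f) p =
      liftedDeg fste snde p * f p / 2 +
      (∑ e, ((if fste e = p.1 then f (snde e, perm e p.2) else 0) +
        (if snde e = p.1 then f (fste e, (perm e)⁻¹ p.2) else 0))) / 2 := by
    intro p
    have hd : (mdeg fste snde p.1 : ℝ) ≠ 0 := by exact_mod_cast (hdeg p.1).ne'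
    rw [ugWalk_mulVec h_ne, liftedDeg]
    field_simp
  have hedges : ∑ p : V × Fin Q, ∑ e, ((if fste e = p.1 then f (snde e, perm e p.2) else 0) +
      (if snde e = p.1 then f (fste e, (perm e)⁻¹ p.2) else 0)) =
      ∑ p, liftedDeg fste snde p * f p := by
    calc _ = ∑ e, (∑ b, f (fste e, b) + ∑ b, f (snde e, b)) := by
          rw [Finset.sum_comm]
          refine Finset.sum_congr rfl fun e _ => ?_
          rw [Fintype.sum_prod_type, Finset.sum_comm]
          simp only [Finset.sum_add_distrib, Finset.sum_ite_eq, Finset.mem_univ, if_true, add_comm]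
          exact congrArg₂ (· + ·) (Equiv.sum_comp (perm e)⁻¹ fun b => f (fste e, b))
            (Equiv.sum_comp (perm e) fun b => f (snde e, b))
      _ = ∑ v, (mdeg fste snde v : ℝ) * ∑ b, f (v, b) := by rw [sum_mdeg_mul_eq_sum_edges]
      _ = _ := by simp [Fintype.sum_prod_type, liftedDeg, Finset.mul_sum]
  rw [dotProduct, Finset.sum_congr rfl fun p _ => hterm p, Finset.sum_add_distrib,
    ← Finset.sum_div, ← Finset.sum_div, hedges, dotProduct]
  ring

theorem liftedDeg_vecMul_ugWalk (h_ne : ∀ e, fste e ≠ snde e) (hdeg : ∀ v, 0 < mdeg fste snde v) :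
    liftedDeg fste snde ᵥ* ugWalk fste snde perm = liftedDeg fste snde := by
  ext q
  have h := liftedDeg_dotProduct_ugWalk_mulVec (perm := perm) h_ne hdeg (Pi.single q 1)
  rwa [dotProduct_mulVec, dotProduct_single, dotProduct_single, mul_one, mul_one] at h

theorem liftedDeg_flow_into_mislabeled_eq_card_violated (h_ne : ∀ e, fste e ≠ snde e)
    (hdeg : ∀ v, 0 < mdeg fste snde v) (x : V → Fin Q) :
    liftedDeg fste snde ⬝ᵥ ((1 - mislabeled x) * (ugWalk fste snde perm *ᵥ mislabeled x)) =
      (violated fste snde perm x).card := by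
  calc _ = ∑ p, (1 - mislabeled x p) *
          (liftedDeg fste snde p * (ugWalk fste snde perm *ᵥ mislabeled x) p) :=
        Finset.sum_congr rfl fun p _ => by
          simp only [Pi.mul_apply, Pi.sub_apply, Pi.one_apply]; ring
    _ = ∑ v, (mdeg fste snde v : ℝ) * (ugWalk fste snde perm *ᵥ mislabeled x) (v, x v) :=
        sum_one_sub_mislabeled_mul x _
    _ = ∑ v, (∑ e, ((if fste e = v then mislabeled x (snde e, perm e (x v)) else 0) +
          (if snde e = v then mislabeled x (fste e, (perm e)⁻¹ (x v)) else 0))) / 2 := by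
        refine Finset.sum_congr rfl fun v _ => ?_
        have hd : (mdeg fste snde v : ℝ) ≠ 0 := by exact_mod_cast (hdeg v).ne'
        have hx : mislabeled x (v, x v) = 0 := if_pos rfl
        rw [ugWalk_mulVec h_ne, hx, zero_div, zero_add]
        field_simp
    _ = (violated fste snde perm x).card := by
        rw [← Finset.sum_div, Finset.sum_comm]
        simp only [Finset.sum_add_distrib, Finset.sum_ite_eq, Finset.mem_univ, if_true,
          mislabeled_snde_perm_eq, mislabeled_fste_perm_inv_eq, Finset.sum_boole,
          Finset.filter_univ_mem]
        ring

theorem ugPr_eq_geomResolvent (L : ℝ) :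
    ugPr fste snde perm L = geomResolvent (ugWalk fste snde perm) L :=
  rfl

theorem ugAmb_nonneg (h_ne : ∀ e, fste e ≠ snde e) (hdeg : ∀ v, 0 < mdeg fste snde v)
    {L : ℝ} (hL : 0 ≤ L) (s : V) (a : Fin Q) : 0 ≤ ugAmb fste snde perm L s a := by
  have hpr := geomResolvent_nonneg (ugWalk_mem_rowStochastic (perm := perm) h_ne hdeg) hL
  refine Finset.sum_nonneg fun v _ => sub_nonneg.2 (Real.iSup_le (fun b => ?_) ?_)
  · exact Finset.single_le_sum (fun b _ => hpr _ (v, b)) (Finset.mem_univ b)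
  · exact Finset.sum_nonneg fun b _ => hpr _ (v, b)

theorem ugMu_nonneg (h_ne : ∀ e, fste e ≠ snde e) (hdeg : ∀ v, 0 < mdeg fste snde v)
    {L : ℝ} (hL : 0 ≤ L) (s : V) : 0 ≤ ugMu fste snde perm L s :=
  Real.iInf_nonneg fun a => ugAmb_nonneg h_ne hdeg hL s a

theorem ugAmb_le_mulVec_mislabeled (x : V → Fin Q) (L : ℝ) (s : V) (a : Fin Q) :
    ugAmb fste snde perm L s a ≤
      (geomResolvent (ugWalk fste snde perm) L *ᵥ mislabeled x) (s, a) := by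
  rw [mulVec, dotProduct, Fintype.sum_prod_type, ugAmb, ugPr_eq_geomResolvent]
  refine Finset.sum_le_sum fun v _ => ?_
  calc _ ≤ ∑ b, geomResolvent (ugWalk fste snde perm) L (s, a) (v, b) -
        geomResolvent (ugWalk fste snde perm) L (s, a) (v, x v) :=
        sub_le_sub_left (le_ciSup (Finite.bddAbove_range _) (x v)) _
    _ = _ := by
        rw [← Finset.sum_erase_eq_sub (Finset.mem_univ _),
          ← Finset.sum_erase_add _ _ (Finset.mem_univ (x v)),
          show mislabeled x (v, x v) = 0 from if_pos rfl, mul_zero, add_zero]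
        exact Finset.sum_congr rfl fun b hb => by
          rw [mislabeled, if_neg (Finset.ne_of_mem_erase hb), mul_one]

theorem one_sub_mislabeled_mul_liftedDeg_dotProduct (x : V → Fin Q) (h : V × Fin Q → ℝ) :
    ((1 - mislabeled x) * liftedDeg fste snde) ⬝ᵥ h = ∑ v, (mdeg fste snde v : ℝ) * h (v, x v) :=
  (Finset.sum_congr rfl fun p _ => by
      simp only [Pi.mul_apply, Pi.sub_apply, Pi.one_apply]; ring).trans
    (sum_one_sub_mislabeled_mul x fun p => liftedDeg fste snde p * h p)

theorem sum_mdeg_mul_ugMu_le (h_ne : ∀ e, fste e ≠ snde e) (hdeg : ∀ v, 0 < mdeg fste snde v)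
    {L : ℝ} (hL : 0 ≤ L) (x : V → Fin Q) :
    ∑ s, (mdeg fste snde s : ℝ) * ugMu fste snde perm L s ≤
      L * (violated fste snde perm x).card := by
  have hf0 : 0 ≤ mislabeled x := fun q => by unfold mislabeled; split_ifs <;> norm_num
  have hf1 : mislabeled x ≤ 1 := fun q => by unfold mislabeled; split_ifs <;> norm_num
  have hg0 : 0 ≤ (1 - mislabeled x) * liftedDeg fste snde := fun q =>
    mul_nonneg (sub_nonneg.2 (hf1 q)) (Nat.cast_nonneg _)
  have hgw : (1 - mislabeled x) * liftedDeg fste snde ≤ liftedDeg fste snde := fun q =>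
    mul_le_of_le_one_left (Nat.cast_nonneg _) (sub_le_self _ (hf0 q))
  have hgf : ((1 - mislabeled x) * liftedDeg fste snde) ⬝ᵥ mislabeled x = 0 := by
    simp [one_sub_mislabeled_mul_liftedDeg_dotProduct, mislabeled]
  calc ∑ s, (mdeg fste snde s : ℝ) * ugMu fste snde perm L s
      ≤ ∑ s, (mdeg fste snde s : ℝ) *
          (geomResolvent (ugWalk fste snde perm) L *ᵥ mislabeled x) (s, x s) := by
        gcongr with s
        exact (ciInf_le (Finite.bddBelow_range _) (x s)).trans
          (ugAmb_le_mulVec_mislabeled x L s (x s))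
    _ = ((1 - mislabeled x) * liftedDeg fste snde) ⬝ᵥ
          (geomResolvent (ugWalk fste snde perm) L *ᵥ mislabeled x) :=
        (one_sub_mislabeled_mul_liftedDeg_dotProduct x _).symm
    _ ≤ ((1 - mislabeled x) * liftedDeg fste snde) ⬝ᵥ mislabeled x + L *
          liftedDeg fste snde ⬝ᵥ ((1 - mislabeled x) * (ugWalk fste snde perm *ᵥ mislabeled x)) :=
        dotProduct_geomResolvent_mulVec_le (ugWalk_mem_rowStochastic h_ne hdeg)
          (liftedDeg_vecMul_ugWalk h_ne hdeg) hf0 hf1 hg0 hgw hL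
    _ = L * (violated fste snde perm x).card := by
        rw [hgf, liftedDeg_flow_into_mislabeled_eq_card_violated h_ne hdeg, zero_add]

theorem sum_mdeg_div_mul_ugMu_le (h_ne : ∀ e, fste e ≠ snde e) (hdeg : ∀ v, 0 < mdeg fste snde v)
    {L : ℝ} (hL : 0 ≤ L) (x : V → Fin Q) :
    ∑ s, (mdeg fste snde s : ℝ) / (2 * Fintype.card E) * ugMu fste snde perm L s ≤
      L / 2 * ((violated fste snde perm x).card / Fintype.card E) :=
  calc _ = (∑ s, (mdeg fste snde s : ℝ) * ugMu fste snde perm L s) / (2 * Fintype.card E) := by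
        rw [Finset.sum_div]
        exact Finset.sum_congr rfl fun s _ => by ring
    _ ≤ L * (violated fste snde perm x).card / (2 * Fintype.card E) := by
        gcongr
        exact sum_mdeg_mul_ugMu_le h_ne hdeg hL x
    _ = _ := by ring

end UniqueGames

/-- Weighted completeness for Unique Games ambiguity: if `τ_UG(𝒰) ≤ ε` then
`E_{s∼π} μ^{UG}_L(s) ≤ C_Q ε L`, and hence `Pr_{s∼π}[μ^{UG}_L(s) ≥ α] ≤ C_Q ε L / α`. -/
theorem stmt13 (Q : ℕ) (hQ : 2 ≤ Q) :
    ∃ C > (0 : ℝ),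
      ∀ (V E : Type) [Fintype V] [Fintype E] [DecidableEq V],
      ∀ (fste snde : E → V) (perm : E → Equiv.Perm (Fin Q)),
        (∀ e, fste e ≠ snde e) →
        (∀ v, 0 < mdeg fste snde v) →
        0 < Fintype.card E →
        ∀ ε : ℝ, tauUG fste snde perm ≤ ε →
        ∀ L : ℝ, 1 ≤ L →
          (∑ s : V, ((mdeg fste snde s : ℝ) / (2 * (Fintype.card E : ℝ))) *
              ugMu fste snde perm L s) ≤ C * ε * L ∧
          ∀ α : ℝ, 0 < α →
            (∑ s ∈ Finset.univ.filter (fun s : V => α ≤ ugMu fste snde perm L s),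
                ((mdeg fste snde s : ℝ) / (2 * (Fintype.card E : ℝ))))
              ≤ C * ε * L / α := by
  refine ⟨1, one_pos, fun V E _ _ _ fste snde perm h_ne hdeg _ ε hτ L hL => ?_⟩
  have : Nonempty (Fin Q) := ⟨⟨0, by omega⟩⟩
  have hL0 : 0 ≤ L := zero_le_one.trans hL
  obtain ⟨x, hx⟩ := Finite.exists_min fun y : V → Fin Q =>
    ((violated fste snde perm y).card : ℝ) / Fintype.card E
  have hxε : ((violated fste snde perm x).card : ℝ) / Fintype.card E ≤ ε :=
    (le_ciInf hx).trans hτ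
  have hε : 0 ≤ ε := (div_nonneg (Nat.cast_nonneg _) (Nat.cast_nonneg _)).trans hxε
  have hmean : ∑ s, (mdeg fste snde s : ℝ) / (2 * Fintype.card E) * ugMu fste snde perm L s ≤
      ε * L :=
    (sum_mdeg_div_mul_ugMu_le h_ne hdeg hL0 x).trans (by nlinarith)
  rw [one_mul]
  exact ⟨hmean, fun α hα => (Finset.sum_filter_le_sum_mul_div _ (fun _ _ => by positivity)
    (fun s _ => ugMu_nonneg h_ne hdeg hL0 s) hα).trans (by gcongr)⟩
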